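/- arXiv:1605.01886 — 3 statements merged into one kernel-verified Lean document; each statement's English description precedes it below -/
import Mathlib

section
/- Let D, E be dlubpos and R an invariant lub-rule class with singletons. Every continuous function f : D → E is also a continuous function from the R-completion of D to the R-completion of E, where the R-completion of a dlubpo adds as natural exactly the directed sets in the closure of its natural sets under the lub-rule system induced by R. -/
universe u

/-- A set is directed: non-empty and upward directed. -/
def Dir {α : Type u} [Preorder α] (A : Set α) : Prop :=
  A.Nonempty ∧ DirectedOn (· ≤ ·) A

/-- The dlubpo axioms for a convergence relation: natural sets are directed
with the designated element as lub, and the singleton axiom S3 holds. -/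
def DlubpoAx {α : Type u} [PartialOrder α] (conv : Set α → α → Prop) : Prop :=
  (∀ (A : Set α) (a : α), conv A a → Dir A ∧ IsLUB A a) ∧ ∀ a : α, conv {a} a

/-- Continuity: monotone and preserving natural lubs. -/
def IsCont {α β : Type u} [PartialOrder α] [PartialOrder β]
    (convD : Set α → α → Prop) (convE : Set β → β → Prop) (f : α → β) : Prop :=
  Monotone f ∧ ∀ (A : Set α) (a : α), convD A a → convE (f '' A) (f a)

/-- Well-founded deductions from a lub-rule system on a partial order. -/
inductive Deduc {α : Type u} (R : Set (Set α) → Set α → Prop) (P : Set (Set α)) :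
    Set α → Prop
  | base {A : Set α} : A ∈ P → Deduc R P A
  | rule {Q : Set (Set α)} {A : Set α} : (∀ B ∈ Q, Deduc R P B) → R Q A → Deduc R P A

/-- Validity of a lub-rule `(P ↝ A)` on a partial order, including
well-formedness: the members of `P` and `A` have lubs, and every monotone map
preserving the lubs of the members of `P` preserves the lub of `A`. -/
def ValidRule {α : Type u} [PartialOrder α] (P : Set (Set α)) (A : Set α) : Prop :=
  (∀ B ∈ P, ∃ b : α, IsLUB B b) ∧ (∃ a : α, IsLUB A a) ∧
  ∀ (β : Type u) [PartialOrder β] (f : α → β), Monotone f →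
    (∀ B ∈ P, ∀ b : α, IsLUB B b → IsLUB (f '' B) (f b)) →
    ∀ a : α, IsLUB A a → IsLUB (f '' A) (f a)

/-- An invariant lub-rule class with singletons: a class of valid lub-rules,
one rule system per partial order, containing all singleton rules
`(∅ ↝ {x})`, and invariant: the image of a rule under a monotone map
preserving the lubs of the pattern is derivable. -/
structure LubRuleClass : Type (u + 1) where
  rules : ∀ (β : Type u) [PartialOrder β], Set (Set β) → Set β → Prop
  valid : ∀ (β : Type u) [PartialOrder β] (P : Set (Set β)) (A : Set β),
    rules β P A → ValidRule P A
  singletons : ∀ (β : Type u) [PartialOrder β] (x : β), rules β ∅ {x}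
  invariant : ∀ (β γ : Type u) [PartialOrder β] [PartialOrder γ]
    (P : Set (Set β)) (A : Set β), rules β P A →
    ∀ f : β → γ, Monotone f →
    (∀ B ∈ P, ∀ b : β, IsLUB B b → IsLUB (f '' B) (f b)) →
    Deduc (rules γ) ((Set.image f) '' P) (f '' A)

/-- The `R`-completion of a dlubpo: natural are exactly the directed sets in
the closure of the natural sets under the lub-rule system induced by `R`. -/
def RComp (R : LubRuleClass.{u}) {α : Type u} [PartialOrder α]
    (conv : Set α → α → Prop) : Set α → α → Prop :=
  fun A a => Dir A ∧ IsLUB A a ∧ Deduc (R.rules α) {B : Set α | ∃ b : α, conv B b} A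


theorem deduc_cut {α : Type u} {R : Set (Set α) → Set α → Prop}
    {P P' : Set (Set α)} (h : ∀ B ∈ P, Deduc R P' B) :
    ∀ {A : Set α}, Deduc R P A → Deduc R P' A := by
  intro A hd
  induction hd with
  | base hA => exact h _ hA
  | rule hQ hR ih => exact Deduc.rule (fun B hB => ih B hB) hR

theorem deduc_preserves (R : LubRuleClass.{u}) {α β : Type u} [PartialOrder α]
    [PartialOrder β] {P : Set (Set α)} {A : Set α}
    (hd : Deduc (R.rules α) P A) (f : α → β) (hm : Monotone f)
    (hP : ∀ B ∈ P, ∀ b : α, IsLUB B b → IsLUB (f '' B) (f b)) :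
    ∀ a : α, IsLUB A a → IsLUB (f '' A) (f a) := by
  induction hd with
  | base hA => exact hP _ hA
  | @rule Q A hQ hR ih =>
      exact (R.valid α Q A hR).2.2 β f hm (fun B hB => ih B hB)

/-- For an invariant lub-rule class `R` with singletons, every continuous
function between dlubpos is also continuous between their `R`-completions. -/
theorem stmt13 (R : LubRuleClass.{u}) {α β : Type u} [PartialOrder α] [PartialOrder β]
    (convD : Set α → α → Prop) (convE : Set β → β → Prop)
    (hD : DlubpoAx convD) (hE : DlubpoAx convE)
    (f : α → β) (hf : IsCont convD convE f) :
    IsCont (RComp R convD) (RComp R convE) f := by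
  obtain ⟨hmono, hconv⟩ := hf
  refine ⟨hmono, ?_⟩
  rintro A a ⟨⟨⟨x, hx⟩, hdir⟩, hlub, hded⟩
  have hbase : ∀ B ∈ {B : Set α | ∃ b : α, convD B b}, ∀ b : α,
      IsLUB B b → IsLUB (f '' B) (f b) := by
    rintro B ⟨b', hb'⟩ b hb
    have hB := (hD.1 B b' hb').2
    have : b = b' := hb.unique hB
    subst this
    exact (hE.1 _ _ (hconv B b hb')).2
  refine ⟨⟨⟨f x, Set.mem_image_of_mem f hx⟩, ?_⟩, ?_, ?_⟩
  · rintro _ ⟨u, hu, rfl⟩ _ ⟨v, hv, rfl⟩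
    obtain ⟨w, hw, hu', hv'⟩ := hdir u hu v hv
    exact ⟨f w, Set.mem_image_of_mem f hw, hmono hu', hmono hv'⟩
  · exact deduc_preserves R hded f hmono hbase a hlub
  · clear hlub hdir hx
    induction hded with
    | @base A hA =>
        obtain ⟨b, hb⟩ := hA
        exact Deduc.base ⟨f b, hconv A b hb⟩
    | @rule Q A hQ hR ih =>
        have hQlub : ∀ B ∈ Q, ∀ b : α, IsLUB B b → IsLUB (f '' B) (f b) :=
          fun B hB => deduc_preserves R (hQ B hB) f hmono hbase
        have := R.invariant α β Q A hR f hmono hQlub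
        refine deduc_cut ?_ this
        rintro _ ⟨B, hB, rfl⟩
        exact ih B hB
end

section
/- Let R be an invariant lub-rule class with singletons. Then the full subcategory R-cat of Dlubpo consisting of dlubpos generated by R is a full reflective subcategory of Dlubpo; the reflector is the R-completion functor, with unit components the identity functions. -/
universe u

theorem Deduc_mono {α : Type u} {R : Set (Set α) → Set α → Prop} {P P' : Set (Set α)}
    (h : P ⊆ P') {A : Set α} (d : Deduc R P A) : Deduc R P' A := by
  induction d with
  | base hA => exact Deduc.base (h hA)
  | rule hQ hR ih => exact Deduc.rule ih hR

theorem Deduc_trans {α : Type u} {R : Set (Set α) → Set α → Prop} {P P' : Set (Set α)}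
    (h : ∀ B ∈ P', Deduc R P B) {A : Set α} (d : Deduc R P' A) : Deduc R P A := by
  induction d with
  | base hA => exact h _ hA
  | rule hQ hR ih => exact Deduc.rule ih hR

theorem Dir.image {α β : Type u} [Preorder α] [Preorder β] {f : α → β} (hf : Monotone f)
    {A : Set α} (h : Dir A) : Dir (f '' A) := by
  obtain ⟨⟨x, hx⟩, hdir⟩ := h
  refine ⟨⟨f x, ⟨x, hx, rfl⟩⟩, ?_⟩
  rintro _ ⟨a, ha, rfl⟩ _ ⟨b, hb, rfl⟩
  obtain ⟨c, hc, hac, hbc⟩ := hdir a ha b hb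
  exact ⟨f c, ⟨c, hc, rfl⟩, hf hac, hf hbc⟩

theorem deduc_lub_pres (R : LubRuleClass.{u}) {α β : Type u} [PartialOrder α]
    [PartialOrder β] {P : Set (Set α)} (f : α → β) (hf : Monotone f)
    (hP : ∀ B ∈ P, ∀ b, IsLUB B b → IsLUB (f '' B) (f b))
    {A : Set α} (d : Deduc (R.rules α) P A) :
    ∀ a, IsLUB A a → IsLUB (f '' A) (f a) := by
  induction d with
  | base hA => exact hP _ hA
  | @rule Q A hQ hR ih =>
    exact fun a ha => (R.valid α Q A hR).2.2 β f hf (fun B hB => ih B hB) a ha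

theorem deduc_transport (R : LubRuleClass.{u}) {α β : Type u} [PartialOrder α]
    [PartialOrder β] {P : Set (Set α)} {PE : Set (Set β)} (f : α → β) (hf : Monotone f)
    (hP : ∀ B ∈ P, ∀ b, IsLUB B b → IsLUB (f '' B) (f b))
    (hPE : ∀ B ∈ P, f '' B ∈ PE)
    {A : Set α} (d : Deduc (R.rules α) P A) : Deduc (R.rules β) PE (f '' A) := by
  induction d with
  | base hA => exact Deduc.base (hPE _ hA)
  | @rule Q A hQ hR ih =>
    have hlub : ∀ B ∈ Q, ∀ b, IsLUB B b → IsLUB (f '' B) (f b) :=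
      fun B hB => deduc_lub_pres R f hf hP (hQ B hB)
    refine Deduc_trans ?_ (R.invariant α β Q A hR f hf hlub)
    rintro B ⟨C, hC, rfl⟩
    exact ih C hC

/-- For an invariant lub-rule class `R` with singletons, the full subcategory
`R`-cat of dlubpos generated by `R` is reflective in `Dlubpo`: the
`R`-completion is a dlubpo lying in `R`-cat (idempotence), the identity is a
continuous unit `D → R-comp D`, `R`-completion is functorial on continuous
maps, and it satisfies the universal property of a reflection. -/
theorem stmt14 (R : LubRuleClass.{u}) {α : Type u} [PartialOrder α]
    (convD : Set α → α → Prop) (hD : DlubpoAx convD) :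
    -- R-comp D is a dlubpo and lies in R-cat (it is a fixed point of R-comp)
    (DlubpoAx (RComp R convD) ∧
      ∀ (A : Set α) (a : α), RComp R (RComp R convD) A a ↔ RComp R convD A a) ∧
    -- the unit (the identity function) is continuous D → R-comp D
    IsCont convD (RComp R convD) id ∧
    -- functoriality on morphisms
    (∀ (β : Type u) [PartialOrder β] (convE : Set β → β → Prop), DlubpoAx convE →
      ∀ f : α → β, IsCont convD convE f →
        IsCont (RComp R convD) (RComp R convE) f) ∧
    -- universal property of the reflection: for E generated by R and
    -- continuous f : D → E there is a unique continuous g : R-comp D → E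
    -- with inc(g) ∘ η = f
    (∀ (β : Type u) [PartialOrder β] (convE : Set β → β → Prop), DlubpoAx convE →
      (∀ (A : Set β) (a : β), RComp R convE A a ↔ convE A a) →
      ∀ f : α → β, IsCont convD convE f →
        ∃! g : α → β, IsCont (RComp R convD) convE g ∧ g ∘ id = f) := by
  have hax : DlubpoAx (RComp R convD) := by
    constructor
    · exact fun A a h => ⟨h.1, h.2.1⟩
    · intro a
      refine ⟨⟨⟨a, rfl⟩, ?_⟩, isLUB_singleton, Deduc.base ⟨a, hD.2 a⟩⟩
      intro x hx y hy
      simp only [Set.mem_singleton_iff] at hx hy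
      subst hx; subst hy
      exact ⟨_, rfl, le_refl _, le_refl _⟩
  have hfunct : ∀ (β : Type u) [PartialOrder β] (convE : Set β → β → Prop),
      DlubpoAx convE → ∀ f : α → β, IsCont convD convE f →
        IsCont (RComp R convD) (RComp R convE) f := by
    intro β _ convE hE f ⟨fmono, fconv⟩
    have hP : ∀ B ∈ {B : Set α | ∃ b : α, convD B b}, ∀ b, IsLUB B b →
        IsLUB (f '' B) (f b) := by
      rintro B ⟨b0, hb0⟩ b hb
      have hlub0 := (hD.1 B b0 hb0).2
      rw [hb.unique hlub0]
      exact (hE.1 _ _ (fconv B b0 hb0)).2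
    have hPE : ∀ B ∈ {B : Set α | ∃ b : α, convD B b},
        f '' B ∈ {B : Set β | ∃ b : β, convE B b} := by
      rintro B ⟨b0, hb0⟩
      exact ⟨f b0, fconv B b0 hb0⟩
    refine ⟨fmono, ?_⟩
    rintro A a ⟨dir, lub, ded⟩
    exact ⟨dir.image fmono, deduc_lub_pres R f fmono hP ded a lub,
      deduc_transport R f fmono hP hPE ded⟩
  refine ⟨⟨hax, ?_⟩, ?_, hfunct, ?_⟩
  · intro A a
    constructor
    · rintro ⟨dir, lub, ded⟩
      refine ⟨dir, lub, Deduc_trans ?_ ded⟩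
      rintro B ⟨b, hb⟩
      exact hb.2.2
    · rintro ⟨dir, lub, ded⟩
      refine ⟨dir, lub, Deduc_mono ?_ ded⟩
      rintro B ⟨b, hb⟩
      exact ⟨b, (hD.1 B b hb).1, (hD.1 B b hb).2, Deduc.base ⟨b, hb⟩⟩
  · refine ⟨monotone_id, ?_⟩
    intro A a h
    simp only [id_eq, Set.image_id']
    exact ⟨(hD.1 A a h).1, (hD.1 A a h).2, Deduc.base ⟨a, h⟩⟩
  · intro β _ convE hE hfix f hf
    refine ⟨f, ⟨⟨hf.1, ?_⟩, rfl⟩, ?_⟩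
    · intro A a h
      exact (hfix _ _).mp ((hfunct β convE hE f hf).2 A a h)
    · rintro g ⟨-, hg⟩
      simpa using hg
end

section
/- Let R be an invariant lub-rule class with singletons, and let E be a dlubpo generated by R. Then E fulfills axiom S10 if and only if for every dlubpo D, the evaluation map eval : (D ⇒ E) × D → E is continuous, where D ⇒ E is the pointwise function space dlubpo. Moreover these are equivalent to: for every dlubpo D, (D ⇒ E) = (D ⇒* E). -/
universe u

/-- The product convergence on `C × D`. -/
def ConvProd {γ α : Type u} [PartialOrder γ] [PartialOrder α]
    (convC : Set γ → γ → Prop) (convD : Set α → α → Prop)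
    (A : Set (γ × α)) (p : γ × α) : Prop :=
  Dir A ∧ convC (Prod.fst '' A) p.1 ∧ convD (Prod.snd '' A) p.2

/-- The pointwise convergence of the function space dlubpo `D ⇒ E`. -/
def ConvPt {α β : Type u} [PartialOrder α] [PartialOrder β]
    (convD : Set α → α → Prop) (convE : Set β → β → Prop)
    (F : Set {f : α → β // IsCont convD convE f})
    (f : {f : α → β // IsCont convD convE f}) : Prop :=
  Dir F ∧ ∀ d : α, convE ((fun g => g.1 d) '' F) (f.1 d)

/-- The convergence of the general function dlubpo `D ⇒* E`. -/
def ConvStar {α β : Type u} [PartialOrder α] [PartialOrder β]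
    (convD : Set α → α → Prop) (convE : Set β → β → Prop)
    (F : Set {f : α → β // IsCont convD convE f})
    (f : {f : α → β // IsCont convD convE f}) : Prop :=
  Dir F ∧
  ∀ A : Set ({f : α → β // IsCont convD convE f} × α),
    Dir A → Prod.fst '' A = F →
    ∀ d : α, convD (Prod.snd '' A) d →
      convE ((fun p => p.1.1 p.2) '' A) (f.1 d)

def S10ax {β : Type u} [PartialOrder β] (conv : Set β → β → Prop) : Prop :=
  ∀ (I : Type u) [PartialOrder I], Nonempty I →
    (∀ i j : I, ∃ k : I, i ≤ k ∧ j ≤ k) →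
    ∀ (y : I → I → β) (x z : I → β) (u : β),
      (∀ i : I, Monotone (y i)) → (∀ j : I, Monotone fun i => y i j) →
      (∀ i : I, conv (Set.range (y i)) (x i)) → conv (Set.range x) u →
      (∀ j : I, conv (Set.range fun i => y i j) (z j)) → conv (Set.range z) u →
      conv (Set.range fun i => y i i) u

/-!
S10 is exactly what makes evaluation `(D ⇒ E) × D → E` continuous: for a natural set `A` of pairs
`(g, d)`, the family `y (g, d) (g', d') = g d'` indexed by `A` has convergent rows (continuity of each `g`)
and columns (pointwise convergence), so S10 gives convergence of the diagonal. Continuity of evaluation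
makes every pointwise-convergent family converge in `D ⇒* E`, and the converse inclusion only needs
singletons in `D`. Conversely, a doubly monotone family `y i j` as in S10 is a family of continuous
functions on `WithTop I` (extending `y i` by its limit `x i` at `⊤`) converging pointwise to the
extension of `z` by `u`; convergence in `D ⇒* E` along the diagonal pairs `(y i, i)` is then the
conclusion of S10.
-/

open Set

lemma Set.range_val_comp_eq_image_image {γ δ ε : Type*} (s : Set γ) (g : δ → ε) (h : γ → δ) :
    range (fun x : s => g (h x)) = g '' (h '' s) := by
  rw [image_image, image_eq_range]

lemma Monotone.dir_range {ι : Type*} {α : Type u} [Preorder ι] [Nonempty ι] [IsDirectedOrder ι]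
    [Preorder α] {f : ι → α} (hf : Monotone f) : Dir (range f) :=
  ⟨range_nonempty f, directedOn_range.2 hf.directed_le⟩

section Eval

variable {α β : Type u} [PartialOrder α] [PartialOrder β]
  {convD : Set α → α → Prop} {convE : Set β → β → Prop}

theorem isCont_eval_of_s10ax (hS : S10ax convE) :
    IsCont (ConvProd (ConvPt convD convE) convD) convE
      (fun p : {f : α → β // IsCont convD convE f} × α => p.1.1 p.2) := by
  refine ⟨fun p q hpq => (p.1.2.1 hpq.2).trans (hpq.1 q.2), ?_⟩
  rintro A ⟨f, d⟩ ⟨hA, hfst, hsnd⟩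
  have hdiag := hS A hA.1.to_subtype (directedOn_iff_directed.1 hA.2)
    (fun i j => i.1.1.1 j.1.2) (fun i => i.1.1.1 d) (fun j => f.1 j.1.2) (f.1 d)
    (fun i _ _ hjj => i.1.1.2.1 hjj.2) (fun j _ _ hii => hii.1 j.1.2)
    (fun i => by
      rw [range_val_comp_eq_image_image A i.1.1.1 Prod.snd]
      exact i.1.1.2.2 _ _ hsnd)
    (by
      rw [range_val_comp_eq_image_image A (fun g => g.1 d) Prod.fst]
      exact hfst.2 d)
    (fun j => by
      rw [range_val_comp_eq_image_image A (fun g => g.1 j.1.2) Prod.fst]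
      exact hfst.2 j.1.2)
    (by
      rw [range_val_comp_eq_image_image A f.1 Prod.snd]
      exact f.2.2 _ _ hsnd)
  rw [image_eq_range]
  exact hdiag

theorem ConvPt.convStar {F : Set {f : α → β // IsCont convD convE f}}
    {f : {f : α → β // IsCont convD convE f}} (hF : ConvPt convD convE F f)
    (heval : IsCont (ConvProd (ConvPt convD convE) convD) convE
      (fun p : {f : α → β // IsCont convD convE f} × α => p.1.1 p.2)) :
    ConvStar convD convE F f :=
  ⟨hF.1, fun A hA hfst d hsnd => heval.2 A (f, d) ⟨hA, hfst ▸ hF, hsnd⟩⟩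

theorem ConvStar.convPt (hD : DlubpoAx convD) {F : Set {f : α → β // IsCont convD convE f}}
    {f : {f : α → β // IsCont convD convE f}} (hF : ConvStar convD convE F f) :
    ConvPt convD convE F f := by
  refine ⟨hF.1, fun d => ?_⟩
  have hdir : Dir (F ×ˢ {d}) := by
    refine ⟨hF.1.1.prod (singleton_nonempty d), ?_⟩
    rintro ⟨g₁, _⟩ ⟨hg₁, h₁⟩ ⟨g₂, _⟩ ⟨hg₂, h₂⟩
    obtain ⟨g, hg, hg₁g, hg₂g⟩ := hF.1.2 g₁ hg₁ g₂ hg₂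
    exact ⟨(g, d), ⟨hg, rfl⟩, ⟨hg₁g, h₁.le⟩, ⟨hg₂g, h₂.le⟩⟩
  have hsnd : convD (Prod.snd '' (F ×ˢ {d})) d := by
    rw [snd_image_prod hF.1.1]
    exact hD.2 d
  have hstar := hF.2 _ hdir (fst_image_prod F (singleton_nonempty d)) d hsnd
  rwa [prod_singleton, image_image] at hstar

end Eval

lemma WithTop.exists_isLUB_range_coe (I : Type*) [Preorder I] :
    ∃ a : WithTop I, IsLUB (range ((↑) : I → WithTop I)) a := by
  by_cases hmax : ∃ j : I, ∀ i, i ≤ j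
  · obtain ⟨j, hj⟩ := hmax
    exact ⟨j, IsGreatest.isLUB ⟨⟨j, rfl⟩, forall_mem_range.2 fun i => WithTop.coe_le_coe.2 (hj i)⟩⟩
  · refine ⟨⊤, fun _ _ => le_top, fun c hc => ?_⟩
    cases c with
    | top => exact le_rfl
    | coe j => exact (hmax ⟨j, fun i => WithTop.coe_le_coe.1 (hc ⟨i, rfl⟩)⟩).elim

section ExtendTop

variable {I β : Type*} {g g' : I → β} {b b' : β}

def extendTop (g : I → β) (b : β) : WithTop I → β := fun d => WithTop.recTopCoe b g d

@[simp] lemma extendTop_top : extendTop g b ⊤ = b := rfl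

@[simp] lemma extendTop_coe (j : I) : extendTop g b j = g j := rfl

lemma extendTop_le_extendTop [Preorder β] (h : g ≤ g') (hb : IsLUB (range g) b)
    (hb' : IsLUB (range g') b') (d : WithTop I) : extendTop g b d ≤ extendTop g' b' d := by
  cases d with
  | top => exact hb.2 (forall_mem_range.2 fun j => (h j).trans (hb'.1 ⟨j, rfl⟩))
  | coe j => exact h j

variable [Preorder I]

lemma extendTop_eq_of_isLUB [PartialOrder β] (hg : Monotone g) (hb : IsLUB (range g) b)
    {a : WithTop I} (ha : IsLUB (range ((↑) : I → WithTop I)) a) : extendTop g b a = b := by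
  cases a with
  | top => rfl
  | coe j =>
    have hj : IsGreatest (range g) (g j) :=
      ⟨⟨j, rfl⟩, forall_mem_range.2 fun i => hg (WithTop.coe_le_coe.1 (ha.1 ⟨i, rfl⟩))⟩
    exact (hb.unique hj.isLUB).symm

end ExtendTop

/-- The dlubpo on `WithTop I` whose natural sets are the singletons and the image of `I`. -/
def ConvWithTop (I : Type u) [Preorder I] (A : Set (WithTop I)) (a : WithTop I) : Prop :=
  Dir A ∧ IsLUB A a ∧ (A = {a} ∨ A = range ((↑) : I → WithTop I))

lemma dlubpoAx_convWithTop (I : Type u) [PartialOrder I] : DlubpoAx (ConvWithTop I) :=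
  ⟨fun _ _ h => ⟨h.1, h.2.1⟩,
    fun a => ⟨⟨singleton_nonempty a, directedOn_singleton a⟩, isLUB_singleton, Or.inl rfl⟩⟩

lemma isCont_extendTop {I β : Type u} [PartialOrder I] [PartialOrder β]
    {convE : Set β → β → Prop} (hE : DlubpoAx convE) {g : I → β} {b : β} (hg : Monotone g) (hb : convE (range g) b) : IsCont (ConvWithTop I) convE (extendTop g b) := by
  have hlub := (hE.1 _ _ hb).2
  refine ⟨WithTop.monotone_iff.2 ⟨hg, fun j => hlub.1 ⟨j, rfl⟩⟩, ?_⟩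
  rintro A a ⟨-, ha, rfl | rfl⟩
  · rw [image_singleton]
    exact hE.2 _
  · rw [← range_comp, extendTop_eq_of_isLUB hg hlub ha]
    exact hb

theorem s10ax_of_convPt_imp_convStar {β : Type u} [PartialOrder β] {convE : Set β → β → Prop}
    (hE : DlubpoAx convE)
    (h : ∀ (I : Type u) [PartialOrder I] (F : Set {f // IsCont (ConvWithTop I) convE f}) f,
      ConvPt (ConvWithTop I) convE F f → ConvStar (ConvWithTop I) convE F f) :
    S10ax convE := by
  intro I _ _ hdir y x z u hy hy' hx hxu hz hzu
  have : IsDirectedOrder I := ⟨hdir⟩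
  have hxl i := (hE.1 _ _ (hx i)).2
  have hzl j := (hE.1 _ _ (hz j)).2
  have hzm : Monotone z := fun j j' hjj =>
    (hzl j).2 (forall_mem_range.2 fun i => (hy i hjj).trans ((hzl j').1 ⟨i, rfl⟩))
  let row i : {f // IsCont (ConvWithTop I) convE f} :=
    ⟨extendTop (y i) (x i), isCont_extendTop hE (hy i) (hx i)⟩
  let lim : {f // IsCont (ConvWithTop I) convE f} :=
    ⟨extendTop z u, isCont_extendTop hE hzm hzu⟩
  have hrow : Monotone row := fun i i' hii =>
    extendTop_le_extendTop (fun j => hy' j hii) (hxl i) (hxl i')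
  have hpt : ConvPt (ConvWithTop I) convE (range row) lim := by
    refine ⟨hrow.dir_range, WithTop.forall.2 ⟨?_, fun j => ?_⟩⟩
    · rw [← range_comp]
      exact hxu
    · rw [← range_comp]
      exact hz j
  obtain ⟨a, ha⟩ := WithTop.exists_isLUB_range_coe I
  have hdiag := (h I _ _ hpt).2 (range fun i => (row i, (i : WithTop I)))
    (hrow.prodMk WithTop.coe_mono).dir_range (by rw [← range_comp]; rfl) a
    (by rw [← range_comp]; exact ⟨WithTop.coe_mono.dir_range, ha, Or.inr rfl⟩)
  rwa [← range_comp, show lim.1 a = u from extendTop_eq_of_isLUB hzm (hE.1 _ _ hzu).2 ha] at hdiag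

theorem stmt15_general {β : Type u} [PartialOrder β]
    (convE : Set β → β → Prop) (hE : DlubpoAx convE) :
    (S10ax convE ↔
      ∀ (α : Type u) [PartialOrder α] (convD : Set α → α → Prop), DlubpoAx convD →
        IsCont (ConvProd (ConvPt convD convE) convD) convE
          (fun p : {f : α → β // IsCont convD convE f} × α => p.1.1 p.2)) ∧
    (S10ax convE ↔
      ∀ (α : Type u) [PartialOrder α] (convD : Set α → α → Prop), DlubpoAx convD →
        ∀ (F : Set {f : α → β // IsCont convD convE f})
          (f : {f : α → β // IsCont convD convE f}),
          ConvPt convD convE F f ↔ ConvStar convD convE F f) :=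
  ⟨⟨fun hS _ _ _ _ => isCont_eval_of_s10ax hS,
      fun heval => s10ax_of_convPt_imp_convStar hE fun I _ _ _ hF =>
        hF.convStar (heval _ _ (dlubpoAx_convWithTop I))⟩,
    ⟨fun hS _ _ _ hD _ _ =>
        ⟨fun hF => hF.convStar (isCont_eval_of_s10ax hS), fun hF => hF.convPt hD⟩,
      fun h => s10ax_of_convPt_imp_convStar hE fun I _ F f =>
        (h _ _ (dlubpoAx_convWithTop I) F f).1⟩⟩

/-- For `E` a dlubpo generated by an invariant lub-rule class `R` with
singletons: `E` fulfills axiom S10 iff for every dlubpo `D` the evaluation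
map `(D ⇒ E) × D → E` is continuous, and iff for every dlubpo `D` the
pointwise function space `D ⇒ E` coincides with the general function dlubpo
`D ⇒* E`. -/
theorem stmt15 (R : LubRuleClass.{u}) {β : Type u} [PartialOrder β]
    (convE : Set β → β → Prop) (hE : DlubpoAx convE)
    (hgen : ∀ (A : Set β) (a : β), RComp R convE A a ↔ convE A a) :
    (S10ax convE ↔
      ∀ (α : Type u) [PartialOrder α] (convD : Set α → α → Prop), DlubpoAx convD →
        IsCont (ConvProd (ConvPt convD convE) convD) convE
          (fun p : {f : α → β // IsCont convD convE f} × α => p.1.1 p.2)) ∧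
    (S10ax convE ↔
      ∀ (α : Type u) [PartialOrder α] (convD : Set α → α → Prop), DlubpoAx convD →
        ∀ (F : Set {f : α → β // IsCont convD convE f})
          (f : {f : α → β // IsCont convD convE f}),
          ConvPt convD convE F f ↔ ConvStar convD convE F f) :=
  stmt15_general convE hE
end
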